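/- Under the Case-C1 setup, the removal of the pair {v_2, v_4} disconnects d_1 from both sources; that is, every path from s_1 to d_1 and every path from s_2 to d_1 contains v_2 or v_4. -/

import Mathlib

open List

/-- `IsPath E p u w` : the nonempty list `p` of vertices is a directed path
from `u` to `w` with respect to the edge relation `E`. -/
def IsPath {V : Type*} (E : V → V → Prop) (p : List V) (u w : V) : Prop :=
  p ≠ [] ∧ p.head? = some u ∧ p.getLast? = some w ∧ p.Chain' E

/-- `Reaches E u w` (written `u ~> w`) : there is a directed path from `u` to `w`. -/
def Reaches {V : Type*} (E : V → V → Prop) (u w : V) : Prop :=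
  ∃ p, IsPath E p u w

/-- A two-unicast layered network: a finite directed graph, with two sources
`s1, s2` and two destinations `d1, d2` (all four distinct), vertices partitioned
into layers `1, ..., r` such that every edge goes from a layer to the next one,
the first layer is `{s1, s2}`, the last layer is `{d1, d2}`, and each source
reaches its corresponding destination. -/
structure TwoUnicastNetwork (V : Type*) [Fintype V] where
  E : V → V → Prop
  s1 : V
  s2 : V
  d1 : V
  d2 : V
  r : ℕ
  layer : V → ℕ
  layer_pos : ∀ v, 1 ≤ layer v
  layer_le : ∀ v, layer v ≤ r
  edge_layer : ∀ u w, E u w → layer w = layer u + 1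
  s_ne : s1 ≠ s2
  d_ne : d1 ≠ d2
  sd_ne : ∀ s d, (s = s1 ∨ s = s2) → (d = d1 ∨ d = d2) → s ≠ d
  first_layer : ∀ v, layer v = 1 ↔ v = s1 ∨ v = s2
  last_layer : ∀ v, layer v = r ↔ v = d1 ∨ v = d2
  conn1 : Reaches E s1 d1
  conn2 : Reaches E s2 d2

/-- `InterferesOn N S Ri srcOther v` : within the induced subgraph `G[S]`, the
node `v` causes interference on the path `Ri` : `v ∈ S`, `v ∉ Ri`, there is an
edge (inside `G[S]`) from `v` into a node of `Ri`, and there is a path from the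
other source `srcOther` to `v` lying inside `G[S]` and disjoint from `Ri`. -/
def InterferesOn {V : Type*} [Fintype V] (N : TwoUnicastNetwork V) (S : Set V)
    (Ri : List V) (srcOther : V) (v : V) : Prop :=
  v ∈ S ∧ v ∉ Ri ∧ (∃ w ∈ Ri, w ∈ S ∧ N.E v w) ∧
    ∃ q, IsPath N.E q srcOther v ∧ (∀ x ∈ q, x ∈ S) ∧ ∀ x ∈ q, x ∉ Ri

/-- `n_i(G[S])` : the number of nodes causing interference on `Ri` within the
induced subgraph `G[S]`, the interfering path coming from `srcOther`. -/
noncomputable def nInterf {V : Type*} [Fintype V] (N : TwoUnicastNetwork V)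
    (S : Set V) (Ri : List V) (srcOther : V) : ℕ :=
  {v | InterferesOn N S Ri srcOther v}.ncard

/-- `n_i^D` : the number of nodes of the other path `Rother` causing (direct)
interference on `Ri` in `G`. -/
noncomputable def nDirect {V : Type*} [Fintype V] (N : TwoUnicastNetwork V)
    (Ri Rother : List V) (srcOther : V) : ℕ :=
  {v | InterferesOn N Set.univ Ri srcOther v ∧ v ∈ Rother}.ncard

/-- The pair `(R1, R2)` (paths `s1 → d1` and `s2 → d2`) has manageable
interference: there is `S ⊇ R1 ∪ R2` with `n_1(G[S]) ≠ 1` and `n_2(G[S]) ≠ 1`. -/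
def Manageable {V : Type*} [Fintype V] (N : TwoUnicastNetwork V)
    (R1 R2 : List V) : Prop :=
  ∃ S : Set V, (∀ x ∈ R1, x ∈ S) ∧ (∀ x ∈ R2, x ∈ S) ∧
    nInterf N S R1 N.s2 ≠ 1 ∧ nInterf N S R2 N.s1 ≠ 1

/-- The pair `(R1, R2)` has `(s1,d1)`-manageable interference. -/
def Manageable1 {V : Type*} [Fintype V] (N : TwoUnicastNetwork V)
    (R1 R2 : List V) : Prop :=
  ∃ S : Set V, (∀ x ∈ R1, x ∈ S) ∧ (∀ x ∈ R2, x ∈ S) ∧ nInterf N S R1 N.s2 ≠ 1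

/-- The pair `(R1, R2)` has `(s2,d2)`-manageable interference. -/
def Manageable2 {V : Type*} [Fintype V] (N : TwoUnicastNetwork V)
    (R1 R2 : List V) : Prop :=
  ∃ S : Set V, (∀ x ∈ R1, x ∈ S) ∧ (∀ x ∈ R2, x ∈ S) ∧ nInterf N S R2 N.s1 ≠ 1

/-- Removal of the vertex `v` disconnects `a` from `b` :
every path from `a` to `b` contains `v`. -/
def CutVert {V : Type*} [Fintype V] (N : TwoUnicastNetwork V) (v a b : V) : Prop :=
  ∀ p, IsPath N.E p a b → v ∈ p

/-!
Both claims contradict the absence of manageable interference. Since `v2` is the only node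
interfering on `P22`, every `S` omitting `v2` has `n_2(G[S]) = 0`, so the `s1`–`d1` path of the
pair must see exactly one interferer in `G[S]`. A path from `s2` to `d1` avoiding `v2` and `v4`
enters `P11` through a node other than `v3`, which gives `(P11, P22)` a second interferer. A path
`p` from `s1` to `d1` avoiding `v2` cannot meet `P22` (its first entry would interfere on `P22`),
so `(p, P22)` is a competing pair; its interferer `u` lies on `P22`, and if `p` also avoids `v4`,
the segment of `P11` after `v4` supplies a second interferer on `p`.
-/

namespace IsPath
variable {V : Type*} {E : V → V → Prop} {p q l₁ l₂ : List V} {a b c d : V}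

lemma head_mem (h : IsPath E p a b) : a ∈ p :=
  List.mem_of_mem_head? h.2.1

lemma last_mem (h : IsPath E p a b) : b ∈ p :=
  List.mem_of_getLast? h.2.2.1

lemma append (hp : IsPath E p a b) (hbc : E b c) (hq : IsPath E q c d) :
    IsPath E (p ++ q) a d := by
  obtain ⟨hp0, hpa, hpb, hpE⟩ := hp
  obtain ⟨hq0, hqc, hqd, hqE⟩ := hq
  refine ⟨by simp [hp0], by simp [List.head?_append, hpa], by simp [List.getLast?_append, hqd], ?_⟩
  exact List.isChain_append.2 ⟨hpE, hqE, by simp_all⟩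

lemma split (h : IsPath E (l₁ ++ c :: l₂) a b) :
    IsPath E (l₁ ++ [c]) a c ∧ IsPath E (c :: l₂) c b := by
  obtain ⟨-, ha, hb, hE⟩ := h
  replace hE := List.isChain_split.1 hE
  exact ⟨⟨by simp, by simpa [List.head?_append] using ha, by simp, hE.1⟩,
    ⟨by simp, rfl, by simpa [List.getLast?_append] using hb, hE.2⟩⟩

lemma exists_prefix (h : IsPath E p a b) (hc : c ∈ p) : ∃ q, IsPath E q a c ∧ q ⊆ p := by
  obtain ⟨l₁, l₂, rfl⟩ := List.append_of_mem hc
  exact ⟨_, h.split.1, List.append_subset.2 ⟨List.subset_append_left _ _, by simp⟩⟩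

lemma exists_suffix (h : IsPath E p a b) (hc : c ∈ p) : ∃ q, IsPath E q c b ∧ q ⊆ p := by
  obtain ⟨l₁, l₂, rfl⟩ := List.append_of_mem hc
  exact ⟨_, h.split.2, List.subset_append_right _ _⟩

lemma exists_edge_into {T : Set V} (h : IsPath E p a b) (ha : a ∉ T) (hT : ∃ x ∈ p, x ∈ T) :
    ∃ q z t, IsPath E q a z ∧ E z t ∧ t ∈ T ∧ t ∈ p ∧ q ⊆ p ∧ ∀ x ∈ q, x ∉ T := by
  classical
  obtain ⟨t, ht⟩ := Option.isSome_iff_exists.1 <|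
    (List.find?_isSome (p := (· ∈ T))).2 (by simpa using hT)
  -- `t` is the first vertex of `p` in `T`; as `a ∉ T`, it has a predecessor `z` on `p`.
  obtain ⟨htT, l₁, l₂, rfl, hl₁⟩ := List.find?_eq_some_iff_append.1 ht
  rcases List.eq_nil_or_concat l₁ with rfl | ⟨l₀, z, rfl⟩
  · obtain rfl : t = a := by simpa using h.2.1
    exact absurd (by simpa using htT) ha
  simp only [List.concat_eq_append, List.append_assoc, List.singleton_append] at h hl₁ ⊢
  refine ⟨l₀ ++ [z], z, t, h.split.1, ?_, by simpa using htT, by simp,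
    List.append_subset.2 ⟨List.subset_append_left _ _, by simp⟩,
    fun x hx => by simpa using hl₁ x (by simpa using hx)⟩
  exact (List.isChain_append_cons_cons.1 h.2.2.2).2.1

end IsPath

section Interference
variable {V : Type*} [Fintype V] {N : TwoUnicastNetwork V} {S S' : Set V} {R R₁ R₂ q : List V}
  {src v w : V}

lemma interferesOn_of_isPath (hq : IsPath N.E q src v) (hqS : ∀ x ∈ q, x ∈ S)
    (hqR : ∀ x ∈ q, x ∉ R) (hvw : N.E v w) (hwR : w ∈ R) (hwS : w ∈ S) :
    InterferesOn N S R src v :=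
  ⟨hqS v hq.last_mem, hqR v hq.last_mem, ⟨w, hwR, hwS, hvw⟩, q, hq, hqS, hqR⟩

lemma InterferesOn.mono (hSS' : S ⊆ S') (h : InterferesOn N S R src v) :
    InterferesOn N S' R src v := by
  obtain ⟨hvS, hvR, ⟨w, hwR, hwS, hvw⟩, q, hq, hqS, hqR⟩ := h
  exact ⟨hSS' hvS, hvR, ⟨w, hwR, hSS' hwS, hvw⟩, q, hq, fun x hx => hSS' (hqS x hx), hqR⟩

lemma one_lt_nInterf (hv : InterferesOn N S R src v) (hw : InterferesOn N S R src w)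
    (hvw : v ≠ w) : 1 < nInterf N S R src :=
  (Set.one_lt_ncard_iff (Set.toFinite _)).2 ⟨v, w, hv, hw, hvw⟩

lemma nInterf_eq_zero (hw : {v | InterferesOn N Set.univ R src v} = {w}) (hwS : w ∉ S) :
    nInterf N S R src = 0 := by
  refine (Set.ncard_eq_zero (Set.toFinite _)).2 (Set.eq_empty_of_forall_notMem fun v hv => ?_)
  obtain rfl : v = w := hw.le (hv.mono (Set.subset_univ S))
  exact hwS hv.1

lemma IsPath.disjoint_of_forall_interferesOn {p : List V} {b : V}
    (hp : IsPath N.E p src b) (hsrc : src ∉ R)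
    (h : ∀ v, InterferesOn N Set.univ R src v → v ∉ p) : p.Disjoint R := by
  intro x hxp hxR
  obtain ⟨q, z, t, hq, hzt, htR, -, hqp, hqR⟩ :=
    hp.exists_edge_into (T := {x | x ∈ R}) hsrc ⟨x, hxp, hxR⟩
  exact h z (interferesOn_of_isPath hq (fun _ _ => trivial) hqR hzt htR trivial)
    (hqp hq.last_mem)

lemma nInterf_eq_one_of_not_manageable (h : ¬ Manageable N R₁ R₂)
    (hw : {v | InterferesOn N Set.univ R₂ N.s1 v} = {w}) (hR₁ : ∀ x ∈ R₁, x ∈ S)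
    (hR₂ : ∀ x ∈ R₂, x ∈ S) (hwS : w ∉ S) : nInterf N S R₁ N.s2 = 1 := by
  by_contra hne
  exact h ⟨S, hR₁, hR₂, hne, by simp [nInterf_eq_zero hw hwS]⟩

end Interference

section CaseC1
variable {V : Type*} [Fintype V] {N : TwoUnicastNetwork V} {P11 P22 p : List V} {v2 v3 v4 : V}

lemma mem_or_mem_of_isPath_s1_d1 (hP11 : IsPath N.E P11 N.s1 N.d1)
    (hP22 : IsPath N.E P22 N.s2 N.d2) (hdisj : P11.Disjoint P22)
    (hNoMan : ∀ R1, IsPath N.E R1 N.s1 N.d1 → R1.Disjoint P22 → ¬ Manageable N R1 P22)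
    (hv3P22 : v3 ∈ P22) (hv4P11 : v4 ∈ P11) (hv3v4 : N.E v3 v4)
    (hv2 : {v | InterferesOn N Set.univ P22 N.s1 v} = {v2}) (hv2P11 : v2 ∉ P11)
    (hp : IsPath N.E p N.s1 N.d1) : v2 ∈ p ∨ v4 ∈ p := by
  by_contra! ⟨hv2p, hv4p⟩
  have hv2P22 : v2 ∉ P22 := (hv2.ge rfl : InterferesOn N _ _ _ v2).2.1
  have hpP22 : p.Disjoint P22 :=
    hp.disjoint_of_forall_interferesOn (fun h => hdisj hP11.head_mem h)
      fun v hv => (hv2.le hv : v = v2) ▸ hv2p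
  have hNoManp := hNoMan p hp hpP22
  obtain ⟨u, hu⟩ : ∃ u, InterferesOn N {x | x ∈ p ∨ x ∈ P22} p N.s2 u := by
    obtain ⟨u, hu⟩ := Set.ncard_eq_one.1 <| nInterf_eq_one_of_not_manageable hNoManp hv2
      (S := {x | x ∈ p ∨ x ∈ P22}) (fun _ => Or.inl) (fun _ => Or.inr) (by simp [hv2p, hv2P22])
    exact ⟨u, hu.ge rfl⟩
  have huP22 : u ∈ P22 := hu.1.resolve_left hu.2.1
  -- A second interferer on `p`: the last node of `P11` after `v4` before it enters `p`,
  -- reached from `s2` along `P22` to `v3`, then `v3 → v4` and `P11`.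
  obtain ⟨q3, hq3, hq3P22⟩ := hP22.exists_prefix hv3P22
  obtain ⟨q4, hq4, hq4P11⟩ := hP11.exists_suffix hv4P11
  obtain ⟨q, x, y, hq, hxy, hyp, -, hqq4, hqp⟩ :=
    hq4.exists_edge_into (T := {x | x ∈ p}) hv4p ⟨N.d1, hq4.last_mem, hp.last_mem⟩
  set S := {x | x ∈ p ∨ x ∈ P22 ∨ x ∈ P11}
  have hx : InterferesOn N S p N.s2 x := by
    refine interferesOn_of_isPath (hq3.append hv3v4 hq) ?_ ?_ hxy hyp (Or.inl hyp)
    · intro w hw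
      rcases List.mem_append.1 hw with hw | hw
      exacts [Or.inr (Or.inl (hq3P22 hw)), Or.inr (Or.inr (hq4P11 (hqq4 hw)))]
    · intro w hw
      rcases List.mem_append.1 hw with hw | hw
      exacts [fun hwp => hpP22 hwp (hq3P22 hw), hqp w hw]
  have hux : u ≠ x := fun h => hdisj (hq4P11 (hqq4 hq.last_mem)) (h ▸ huP22)
  have hS : {x | x ∈ p ∨ x ∈ P22} ⊆ S := fun w hw => hw.imp_right Or.inl
  exact (nInterf_eq_one_of_not_manageable hNoManp hv2 (S := S) (fun _ => Or.inl)
    (fun _ => Or.inr ∘ Or.inl) (by simp [S, hv2p, hv2P22, hv2P11])).not_gt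
    (one_lt_nInterf (hu.mono hS) hx hux)

lemma mem_or_mem_of_isPath_s2_d1 (hP11 : IsPath N.E P11 N.s1 N.d1)
    (hP22 : IsPath N.E P22 N.s2 N.d2) (hdisj : P11.Disjoint P22)
    (hNoMan : ¬ Manageable N P11 P22)
    (hv3P22 : v3 ∈ P22) (hv4P11 : v4 ∈ P11) (hv3v4 : N.E v3 v4)
    (hv3v4unique : ∀ w ∈ P11, N.E v3 w → w = v4)
    (hv2 : {v | InterferesOn N Set.univ P22 N.s1 v} = {v2}) (hv2P11 : v2 ∉ P11)
    (hp : IsPath N.E p N.s2 N.d1) : v2 ∈ p ∨ v4 ∈ p := by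
  by_contra! ⟨hv2p, hv4p⟩
  have hv2P22 : v2 ∉ P22 := (hv2.ge rfl : InterferesOn N _ _ _ v2).2.1
  obtain ⟨q, z, t, hq, hzt, htP11, htp, hqp, hqP11⟩ :=
    hp.exists_edge_into (T := {x | x ∈ P11}) (fun h => hdisj h hP22.head_mem)
      ⟨N.d1, hp.last_mem, hP11.last_mem⟩
  set S := {x | x ∈ P11 ∨ x ∈ P22 ∨ x ∈ q}
  have hz : InterferesOn N S P11 N.s2 z :=
    interferesOn_of_isPath hq (fun _ => Or.inr ∘ Or.inr) hqP11 hzt htP11 (Or.inl htP11)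
  obtain ⟨q3, hq3, hq3P22⟩ := hP22.exists_prefix hv3P22
  have hv3 : InterferesOn N S P11 N.s2 v3 :=
    interferesOn_of_isPath hq3 (fun _ hx => Or.inr (Or.inl (hq3P22 hx)))
      (fun _ hx h => hdisj h (hq3P22 hx)) hv3v4 hv4P11 (Or.inl hv4P11)
  have hzv3 : z ≠ v3 := by
    rintro rfl
    exact hv4p (hv3v4unique t htP11 hzt ▸ htp)
  exact (nInterf_eq_one_of_not_manageable hNoMan hv2 (S := S) (fun _ => Or.inl)
    (fun _ => Or.inr ∘ Or.inl) (by simp [S, hv2P11, hv2P22, mt (@hqp v2) hv2p])).not_gt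
    (one_lt_nInterf hz hv3 hzv3)

end CaseC1

theorem statement8_general {V : Type*} [Fintype V]
    (N : TwoUnicastNetwork V)
    (P11 P22 : List V)
    (v2 v3 v4 : V)
    (hP11 : IsPath N.E P11 N.s1 N.d1)
    (hP22 : IsPath N.E P22 N.s2 N.d2)
    (hdisj : P11.Disjoint P22)
    (hNoMan : ∀ R1 R2 : List V, IsPath N.E R1 N.s1 N.d1 → IsPath N.E R2 N.s2 N.d2 →
      R1.Disjoint R2 → ¬ Manageable N R1 R2)
    (hn2D : nDirect N P22 P11 N.s1 = 0)
    (hv3P22 : v3 ∈ P22)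
    (hv4P11 : v4 ∈ P11)
    (hv3v4 : N.E v3 v4)
    (hv3v4unique : ∀ w ∈ P11, N.E v3 w → w = v4)
    (hv2unique : {v | InterferesOn N Set.univ P22 N.s1 v} = {v2}) :
    (∀ p : List V, IsPath N.E p N.s1 N.d1 → v2 ∈ p ∨ v4 ∈ p) ∧
    (∀ p : List V, IsPath N.E p N.s2 N.d1 → v2 ∈ p ∨ v4 ∈ p) := by
  have hv2P11 : v2 ∉ P11 := fun h =>
    ((Set.ncard_eq_zero (Set.toFinite _)).1 hn2D).subset ⟨(hv2unique.ge rfl : InterferesOn N _ _ _ v2), h⟩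
  exact ⟨fun p => mem_or_mem_of_isPath_s1_d1 hP11 hP22 hdisj
      (fun R1 hR1 => hNoMan R1 P22 hR1 hP22) hv3P22 hv4P11 hv3v4 hv2unique hv2P11,
    fun p => mem_or_mem_of_isPath_s2_d1 hP11 hP22 hdisj (hNoMan P11 P22 hP11 hP22 hdisj)
      hv3P22 hv4P11 hv3v4 hv3v4unique hv2unique hv2P11⟩

theorem statement8 {V : Type*} [Fintype V] [DecidableEq V]
    (N : TwoUnicastNetwork V)
    (P11 P22 Ps2v1 Pvmv1 Ps1v2 : List V)
    (v0 v1 v2 v3 v4 v5 v6 vm : V)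
    (hP11 : IsPath N.E P11 N.s1 N.d1)
    (hP22 : IsPath N.E P22 N.s2 N.d2)
    (hdisj : P11.Disjoint P22)
    (hNoMan : ∀ R1 R2 : List V, IsPath N.E R1 N.s1 N.d1 → IsPath N.E R2 N.s2 N.d2 →
      R1.Disjoint R2 → ¬ Manageable N R1 R2)
    (hn1 : 2 ≤ nInterf N Set.univ P11 N.s2)
    (hn1D : nDirect N P11 P22 N.s2 = 1)
    (hn2 : nInterf N Set.univ P22 N.s1 = 1)
    (hn2D : nDirect N P22 P11 N.s1 = 0)
    (hv3P22 : v3 ∈ P22)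
    (hv3unique : {v | InterferesOn N Set.univ P11 N.s2 v ∧ v ∈ P22} = {v3})
    (hv4P11 : v4 ∈ P11)
    (hv3v4 : N.E v3 v4)
    (hv3v4unique : ∀ w ∈ P11, N.E v3 w → w = v4)
    (hv1P11 : v1 ∉ P11)
    (hv1P22 : v1 ∉ P22)
    (hv1int : InterferesOn N Set.univ P11 N.s2 v1)
    (hPs2v1 : IsPath N.E Ps2v1 N.s2 v1)
    (hPs2v1disj : Ps2v1.Disjoint P11)
    (hvmP22 : vm ∈ P22)
    (hvmPs2v1 : vm ∈ Ps2v1)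
    (hvmlast : ∀ x ∈ Ps2v1, x ∈ P22 → Ps2v1.idxOf x ≤ Ps2v1.idxOf vm)
    (hPvmv1 : IsPath N.E Pvmv1 vm v1)
    (hPvmv1suffix : Pvmv1 <:+ Ps2v1)
    (hv2Pvmv1 : v2 ∈ Pvmv1)
    (hv2ne : v2 ≠ vm)
    (hv2unique : {v | InterferesOn N Set.univ P22 N.s1 v} = {v2})
    (hv0P22 : v0 ∈ P22)
    (hv2v0 : N.E v2 v0)
    (hv2v0unique : ∀ w ∈ P22, N.E v2 w → w = v0)
    (hPs1v2 : IsPath N.E Ps1v2 N.s1 v2)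
    (hPs1v2sub : ∀ x ∈ Ps1v2, x ∈ P11 ∨ x ∈ P22 ∨ x ∈ Pvmv1)
    (hv5P11 : v5 ∈ P11)
    (hv5mem : v5 ∈ Ps1v2)
    (hv5last : ∀ x ∈ Ps1v2, x ∈ P11 → Ps1v2.idxOf x ≤ Ps1v2.idxOf v5)
    (hv6succ : ∃ k : ℕ, Ps1v2[k]? = some v5 ∧ Ps1v2[k+1]? = some v6) :
    (∀ p : List V, IsPath N.E p N.s1 N.d1 → v2 ∈ p ∨ v4 ∈ p) ∧
    (∀ p : List V, IsPath N.E p N.s2 N.d1 → v2 ∈ p ∨ v4 ∈ p) :=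
  statement8_general N P11 P22 v2 v3 v4 hP11 hP22 hdisj hNoMan hn2D hv3P22 hv4P11 hv3v4 hv3v4unique
    hv2unique
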